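/- Let φ be an LTL formula in negation normal form and w an infinite word over 2^Ap. If X = GF_w and Y = FG_w, then w ⊨ GF(ψ[Y]_μ) for every ψ ∈ X, and w ⊨ FG(ψ[X]_ν) for every ψ ∈ Y. -/
import Mathlib


/-- LTL formulas in negation normal form over atomic propositions `Ap`. -/
inductive LTL (Ap : Type) : Type
  | tt : LTL Ap
  | ff : LTL Ap
  | atom (a : Ap) : LTL Ap
  | natom (a : Ap) : LTL Ap
  | conj (φ ψ : LTL Ap) : LTL Ap
  | disj (φ ψ : LTL Ap) : LTL Ap
  | next (φ : LTL Ap) : LTL Ap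
  | fut (φ : LTL Ap) : LTL Ap
  | glob (φ : LTL Ap) : LTL Ap
  | untl (φ ψ : LTL Ap) : LTL Ap
  | wUntl (φ ψ : LTL Ap) : LTL Ap
  | strongRel (φ ψ : LTL Ap) : LTL Ap
  | rel (φ ψ : LTL Ap) : LTL Ap

variable {Ap : Type} [DecidableEq Ap]

/-- The suffix `w_i` of an infinite word. -/
def suffix (w : ℕ → Finset Ap) (i : ℕ) : ℕ → Finset Ap := fun k => w (i + k)

/-- Standard LTL satisfaction over infinite words over `2^Ap`. -/
def Sat : (ℕ → Finset Ap) → LTL Ap → Prop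
  | _, .tt => True
  | _, .ff => False
  | w, .atom a => a ∈ w 0
  | w, .natom a => a ∉ w 0
  | w, .conj φ ψ => Sat w φ ∧ Sat w ψ
  | w, .disj φ ψ => Sat w φ ∨ Sat w ψ
  | w, .next φ => Sat (suffix w 1) φ
  | w, .fut φ => ∃ k, Sat (suffix w k) φ
  | w, .glob φ => ∀ k, Sat (suffix w k) φ
  | w, .untl φ ψ => ∃ k, Sat (suffix w k) ψ ∧ ∀ j < k, Sat (suffix w j) φ
  | w, .wUntl φ ψ =>
      (∀ k, Sat (suffix w k) φ) ∨ (∃ k, Sat (suffix w k) ψ ∧ ∀ j < k, Sat (suffix w j) φ)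
  | w, .strongRel φ ψ => ∃ k, Sat (suffix w k) φ ∧ ∀ j ≤ k, Sat (suffix w j) ψ
  | w, .rel φ ψ =>
      (∀ k, Sat (suffix w k) ψ) ∨ (∃ k, Sat (suffix w k) φ ∧ ∀ j ≤ k, Sat (suffix w j) ψ)

/-- The "after" function on a single letter `ν ∈ 2^Ap`. -/
def afLetter : LTL Ap → Finset Ap → LTL Ap
  | .tt, _ => .tt
  | .ff, _ => .ff
  | .atom a, ν => if a ∈ ν then .tt else .ff
  | .natom a, ν => if a ∈ ν then .ff else .tt
  | .conj φ ψ, ν => .conj (afLetter φ ν) (afLetter ψ ν)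
  | .disj φ ψ, ν => .disj (afLetter φ ν) (afLetter ψ ν)
  | .next φ, _ => φ
  | .fut φ, ν => .disj (afLetter φ ν) (.fut φ)
  | .glob φ, ν => .conj (afLetter φ ν) (.glob φ)
  | .untl φ ψ, ν => .disj (afLetter ψ ν) (.conj (afLetter φ ν) (.untl φ ψ))
  | .wUntl φ ψ, ν => .disj (afLetter ψ ν) (.conj (afLetter φ ν) (.wUntl φ ψ))
  | .strongRel φ ψ, ν => .conj (afLetter ψ ν) (.disj (afLetter φ ν) (.strongRel φ ψ))
  | .rel φ ψ, ν => .conj (afLetter ψ ν) (.disj (afLetter φ ν) (.rel φ ψ))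

/-- The "after" function extended to finite words. -/
def af : LTL Ap → List (Finset Ap) → LTL Ap
  | φ, [] => φ
  | φ, ν :: u => af (afLetter φ ν) u

/-- The finite prefix `w_{0i} = w[0]⋯w[i-1]` of an infinite word. -/
def prefixWord (w : ℕ → Finset Ap) (i : ℕ) : List (Finset Ap) :=
  (List.range i).map w

/-- The finite infix `w_{ij} = w[i]⋯w[j-1]` of an infinite word. -/
def infixWord (w : ℕ → Finset Ap) (i j : ℕ) : List (Finset Ap) :=
  (List.range (j - i)).map (fun k => w (i + k))

/-- Evaluation of a formula as a propositional formula, where every maximal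
proper subformula (root not `∧`/`∨`) is treated as a propositional variable
whose truth value is given by the assignment `v`. -/
def propEval (v : LTL Ap → Prop) : LTL Ap → Prop
  | .tt => True
  | .ff => False
  | .conj φ ψ => propEval v φ ∧ propEval v ψ
  | .disj φ ψ => propEval v φ ∨ propEval v ψ
  | φ => v φ

/-- Propositional equivalence `φ ≡_P ψ`. -/
def propEquiv (φ ψ : LTL Ap) : Prop := ∀ v, propEval v φ ↔ propEval v ψ

/-- The set of subformulas of a formula (including itself). -/
def subf : LTL Ap → Set (LTL Ap)
  | .tt => {LTL.tt}
  | .ff => {LTL.ff}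
  | .atom a => {LTL.atom a}
  | .natom a => {LTL.natom a}
  | .conj φ ψ => insert (.conj φ ψ) (subf φ ∪ subf ψ)
  | .disj φ ψ => insert (.disj φ ψ) (subf φ ∪ subf ψ)
  | .next φ => insert (.next φ) (subf φ)
  | .fut φ => insert (.fut φ) (subf φ)
  | .glob φ => insert (.glob φ) (subf φ)
  | .untl φ ψ => insert (.untl φ ψ) (subf φ ∪ subf ψ)
  | .wUntl φ ψ => insert (.wUntl φ ψ) (subf φ ∪ subf ψ)
  | .strongRel φ ψ => insert (.strongRel φ ψ) (subf φ ∪ subf ψ)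
  | .rel φ ψ => insert (.rel φ ψ) (subf φ ∪ subf ψ)

/-- A formula is proper if its root is not a conjunction or a disjunction. -/
def isProper : LTL Ap → Prop
  | .conj _ _ => False
  | .disj _ _ => False
  | _ => True

/-- The set of proper subformulas of `φ`. -/
def properSubf (φ : LTL Ap) : Set (LTL Ap) := {ψ | ψ ∈ subf φ ∧ isProper ψ}

/-- Formulas whose root is a least-fixed-point operator (`F`, `U`, `M`). -/
def isMu : LTL Ap → Prop
  | .fut _ => True
  | .untl _ _ => True
  | .strongRel _ _ => True
  | _ => False

/-- Formulas whose root is a greatest-fixed-point operator (`G`, `W`, `R`). -/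
def isNu : LTL Ap → Prop
  | .glob _ => True
  | .wUntl _ _ => True
  | .rel _ _ => True
  | _ => False

/-- `μ(φ)`: subformulas of `φ` of the form `Fψ`, `ψ₁Uψ₂`, `ψ₁Mψ₂`. -/
def muSet (φ : LTL Ap) : Set (LTL Ap) := {ψ | ψ ∈ subf φ ∧ isMu ψ}

/-- `ν(φ)`: subformulas of `φ` of the form `Gψ`, `ψ₁Wψ₂`, `ψ₁Rψ₂`. -/
def nuSet (φ : LTL Ap) : Set (LTL Ap) := {ψ | ψ ∈ subf φ ∧ isNu ψ}

/-- `GF_w = {ψ ∈ μ(φ) | w ⊨ GFψ}`. -/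
def GFSet (φ : LTL Ap) (w : ℕ → Finset Ap) : Set (LTL Ap) :=
  {ψ | ψ ∈ muSet φ ∧ Sat w (.glob (.fut ψ))}

/-- `F_w = {ψ ∈ μ(φ) | w ⊨ Fψ}`. -/
def FSet (φ : LTL Ap) (w : ℕ → Finset Ap) : Set (LTL Ap) :=
  {ψ | ψ ∈ muSet φ ∧ Sat w (.fut ψ)}

/-- `FG_w = {ψ ∈ ν(φ) | w ⊨ FGψ}`. -/
def FGSet (φ : LTL Ap) (w : ℕ → Finset Ap) : Set (LTL Ap) :=
  {ψ | ψ ∈ nuSet φ ∧ Sat w (.fut (.glob ψ))}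

/-- `G_w = {ψ ∈ ν(φ) | w ⊨ Gψ}`. -/
def GSet (φ : LTL Ap) (w : ℕ → Finset Ap) : Set (LTL Ap) :=
  {ψ | ψ ∈ nuSet φ ∧ Sat w (.glob ψ)}

open scoped Classical in
/-- `φ[X]_ν`. -/
noncomputable def evalNu (X : Set (LTL Ap)) : LTL Ap → LTL Ap
  | .tt => .tt
  | .ff => .ff
  | .atom a => .atom a
  | .natom a => .natom a
  | .conj φ ψ => .conj (evalNu X φ) (evalNu X ψ)
  | .disj φ ψ => .disj (evalNu X φ) (evalNu X ψ)
  | .next φ => .next (evalNu X φ)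
  | .glob φ => .glob (evalNu X φ)
  | .wUntl φ ψ => .wUntl (evalNu X φ) (evalNu X ψ)
  | .rel φ ψ => .rel (evalNu X φ) (evalNu X ψ)
  | .fut φ => if LTL.fut φ ∈ X then .tt else .ff
  | .untl φ ψ => if LTL.untl φ ψ ∈ X then .wUntl (evalNu X φ) (evalNu X ψ) else .ff
  | .strongRel φ ψ => if LTL.strongRel φ ψ ∈ X then .rel (evalNu X φ) (evalNu X ψ) else .ff

open scoped Classical in
/-- `φ[Y]_μ`. -/
noncomputable def evalMu (Y : Set (LTL Ap)) : LTL Ap → LTL Ap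
  | .tt => .tt
  | .ff => .ff
  | .atom a => .atom a
  | .natom a => .natom a
  | .conj φ ψ => .conj (evalMu Y φ) (evalMu Y ψ)
  | .disj φ ψ => .disj (evalMu Y φ) (evalMu Y ψ)
  | .next φ => .next (evalMu Y φ)
  | .fut φ => .fut (evalMu Y φ)
  | .untl φ ψ => .untl (evalMu Y φ) (evalMu Y ψ)
  | .strongRel φ ψ => .strongRel (evalMu Y φ) (evalMu Y ψ)
  | .glob φ => if LTL.glob φ ∈ Y then .tt else .ff
  | .wUntl φ ψ => if LTL.wUntl φ ψ ∈ Y then .tt else .untl (evalMu Y φ) (evalMu Y ψ)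
  | .rel φ ψ => if LTL.rel φ ψ ∈ Y then .tt else .strongRel (evalMu Y φ) (evalMu Y ψ)

/-- Concatenation `u·w` of a finite word and an infinite word. -/
def wordAppend (u : List (Finset Ap)) (w : ℕ → Finset Ap) : ℕ → Finset Ap :=
  fun i => if h : i < u.length then u.get ⟨i, h⟩ else w (i - u.length)

/-- The smallest set of formulas containing `tt`, `ff` and all elements of `S`
that is closed under conjunction and disjunction. -/
inductive PosBool (S : Set (LTL Ap)) : LTL Ap → Prop
  | tt : PosBool S .tt
  | ff : PosBool S .ff
  | base {ψ : LTL Ap} : ψ ∈ S → PosBool S ψ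
  | conj {φ ψ : LTL Ap} : PosBool S φ → PosBool S ψ → PosBool S (.conj φ ψ)
  | disj {φ ψ : LTL Ap} : PosBool S φ → PosBool S ψ → PosBool S (.disj φ ψ)

/-- `Reach(φ)`: the set of `≡_P`-equivalence classes of the formulas `af(φ,u)`
over all finite words `u`. -/
def Reach (φ : LTL Ap) : Set (Set (LTL Ap)) :=
  {C | ∃ u : List (Finset Ap), C = {ψ | propEquiv ψ (af φ u)}}

/-- The fragment `μLTL`: only `tt`, `ff`, literals, `∧`, `∨`, `X`, `F`, `U`, `M`. -/
def inMuLTL : LTL Ap → Prop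
  | .tt => True
  | .ff => True
  | .atom _ => True
  | .natom _ => True
  | .conj φ ψ => inMuLTL φ ∧ inMuLTL ψ
  | .disj φ ψ => inMuLTL φ ∧ inMuLTL ψ
  | .next φ => inMuLTL φ
  | .fut φ => inMuLTL φ
  | .untl φ ψ => inMuLTL φ ∧ inMuLTL ψ
  | .strongRel φ ψ => inMuLTL φ ∧ inMuLTL ψ
  | .glob _ => False
  | .wUntl _ _ => False
  | .rel _ _ => False

/-- The fragment `νLTL`: only `tt`, `ff`, literals, `∧`, `∨`, `X`, `G`, `W`, `R`. -/
def inNuLTL : LTL Ap → Prop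
  | .tt => True
  | .ff => True
  | .atom _ => True
  | .natom _ => True
  | .conj φ ψ => inNuLTL φ ∧ inNuLTL ψ
  | .disj φ ψ => inNuLTL φ ∧ inNuLTL ψ
  | .next φ => inNuLTL φ
  | .glob φ => inNuLTL φ
  | .wUntl φ ψ => inNuLTL φ ∧ inNuLTL ψ
  | .rel φ ψ => inNuLTL φ ∧ inNuLTL ψ
  | .fut _ => False
  | .untl _ _ => False
  | .strongRel _ _ => False

section Aux

variable {Ap : Type} [DecidableEq Ap]

lemma suffix_suffix (w : ℕ → Finset Ap) (i j : ℕ) :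
    suffix (suffix w i) j = suffix w (i + j) := by
  funext k; simp [suffix, Nat.add_assoc]

lemma mem_subf_self (ψ : LTL Ap) : ψ ∈ subf ψ := by
  cases ψ <;> simp [subf]

lemma subf_trans (φ : LTL Ap) : ∀ ψ ∈ subf φ, subf ψ ⊆ subf φ := by
  induction φ with
  | tt => intro ψ h; have e : ψ = LTL.tt:= (by simpa [subf] using h); subst e; exact subset_rfl
  | ff => intro ψ h; have e : ψ = LTL.ff:= (by simpa [subf] using h); subst e; exact subset_rfl
  | atom a => intro ψ h; have e : ψ = LTL.atom a:= (by simpa [subf] using h); subst e; exact subset_rfl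
  | natom a => intro ψ h; have e : ψ = LTL.natom a:= (by simpa [subf] using h); subst e; exact subset_rfl
  | next a iha =>
      intro ψ h
      rcases (show ψ = LTL.next a ∨ ψ ∈ subf a by simpa [subf] using h) with rfl | h
      · exact subset_rfl
      · exact (iha ψ h).trans fun x hx => by simp [subf]; tauto
  | fut a iha =>
      intro ψ h
      rcases (show ψ = LTL.fut a ∨ ψ ∈ subf a by simpa [subf] using h) with rfl | h
      · exact subset_rfl
      · exact (iha ψ h).trans fun x hx => by simp [subf]; tauto
  | glob a iha =>
      intro ψ h
      rcases (show ψ = LTL.glob a ∨ ψ ∈ subf a by simpa [subf] using h) with rfl | h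
      · exact subset_rfl
      · exact (iha ψ h).trans fun x hx => by simp [subf]; tauto
  | conj a b iha ihb =>
      intro ψ h
      rcases (show ψ = LTL.conj a b ∨ ψ ∈ subf a ∨ ψ ∈ subf b by simpa [subf] using h) with rfl | h | h
      · exact subset_rfl
      · exact (iha ψ h).trans fun x hx => by simp [subf]; tauto
      · exact (ihb ψ h).trans fun x hx => by simp [subf]; tauto
  | disj a b iha ihb =>
      intro ψ h
      rcases (show ψ = LTL.disj a b ∨ ψ ∈ subf a ∨ ψ ∈ subf b by simpa [subf] using h) with rfl | h | h
      · exact subset_rfl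
      · exact (iha ψ h).trans fun x hx => by simp [subf]; tauto
      · exact (ihb ψ h).trans fun x hx => by simp [subf]; tauto
  | untl a b iha ihb =>
      intro ψ h
      rcases (show ψ = LTL.untl a b ∨ ψ ∈ subf a ∨ ψ ∈ subf b by simpa [subf] using h) with rfl | h | h
      · exact subset_rfl
      · exact (iha ψ h).trans fun x hx => by simp [subf]; tauto
      · exact (ihb ψ h).trans fun x hx => by simp [subf]; tauto
  | wUntl a b iha ihb =>
      intro ψ h
      rcases (show ψ = LTL.wUntl a b ∨ ψ ∈ subf a ∨ ψ ∈ subf b by simpa [subf] using h) with rfl | h | h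
      · exact subset_rfl
      · exact (iha ψ h).trans fun x hx => by simp [subf]; tauto
      · exact (ihb ψ h).trans fun x hx => by simp [subf]; tauto
  | strongRel a b iha ihb =>
      intro ψ h
      rcases (show ψ = LTL.strongRel a b ∨ ψ ∈ subf a ∨ ψ ∈ subf b by simpa [subf] using h) with rfl | h | h
      · exact subset_rfl
      · exact (iha ψ h).trans fun x hx => by simp [subf]; tauto
      · exact (ihb ψ h).trans fun x hx => by simp [subf]; tauto
  | rel a b iha ihb =>
      intro ψ h
      rcases (show ψ = LTL.rel a b ∨ ψ ∈ subf a ∨ ψ ∈ subf b by simpa [subf] using h) with rfl | h | h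
      · exact subset_rfl
      · exact (iha ψ h).trans fun x hx => by simp [subf]; tauto
      · exact (ihb ψ h).trans fun x hx => by simp [subf]; tauto

end Aux
section Mu

variable {Ap : Type} [DecidableEq Ap]

lemma notGF {w : ℕ → Finset Ap} {ψ : LTL Ap} (h : ¬ Sat w (LTL.glob (LTL.fut ψ))) :
    ∃ N, ∀ m, N ≤ m → ¬ Sat (suffix w m) ψ := by
  by_contra hc
  push_neg at hc
  apply h
  intro k
  obtain ⟨m, hm, hsm⟩ := hc k
  refine ⟨m - k, ?_⟩
  rw [suffix_suffix, Nat.add_sub_cancel' hm]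
  exact hsm

lemma muLemma (φ : LTL Ap) (w : ℕ → Finset Ap) :
    ∀ ψ : LTL Ap, subf ψ ⊆ subf φ →
      ∀ i, Sat (suffix w i) ψ → Sat (suffix w i) (evalMu (FGSet φ w) ψ) := by
  intro ψ
  induction ψ with
  | tt => intro _ i hs; simpa [evalMu] using hs
  | ff => intro _ i hs; simpa [evalMu] using hs
  | atom a => intro _ i hs; simpa [evalMu] using hs
  | natom a => intro _ i hs; simpa [evalMu] using hs
  | conj a b iha ihb =>
      intro h i hs
      have ha : subf a ⊆ subf φ := fun x hx => h (by simp [subf]; tauto)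
      have hb : subf b ⊆ subf φ := fun x hx => h (by simp [subf]; tauto)
      obtain ⟨h1, h2⟩ := hs
      exact ⟨iha ha i h1, ihb hb i h2⟩
  | disj a b iha ihb =>
      intro h i hs
      have ha : subf a ⊆ subf φ := fun x hx => h (by simp [subf]; tauto)
      have hb : subf b ⊆ subf φ := fun x hx => h (by simp [subf]; tauto)
      rcases hs with h1 | h1
      · exact Or.inl (iha ha i h1)
      · exact Or.inr (ihb hb i h1)
  | next a iha =>
      intro h i hs
      have ha : subf a ⊆ subf φ := fun x hx => h (by simp [subf]; tauto)
      show Sat (suffix (suffix w i) 1) (evalMu (FGSet φ w) a)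
      rw [suffix_suffix]
      rw [show Sat (suffix w i) (LTL.next a) = Sat (suffix (suffix w i) 1) a from rfl,
        suffix_suffix] at hs
      exact iha ha _ hs
  | fut a iha =>
      intro h i hs
      have ha : subf a ⊆ subf φ := fun x hx => h (by simp [subf]; tauto)
      obtain ⟨k, hk⟩ := hs
      rw [suffix_suffix] at hk
      exact ⟨k, by rw [suffix_suffix]; exact iha ha _ hk⟩
  | untl a b iha ihb =>
      intro h i hs
      have ha : subf a ⊆ subf φ := fun x hx => h (by simp [subf]; tauto)
      have hb : subf b ⊆ subf φ := fun x hx => h (by simp [subf]; tauto)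
      obtain ⟨k, hk2, hk1⟩ := hs
      rw [suffix_suffix] at hk2
      refine ⟨k, ?_, fun j hj => ?_⟩
      · rw [suffix_suffix]; exact ihb hb _ hk2
      · rw [suffix_suffix]
        have := hk1 j hj
        rw [suffix_suffix] at this
        exact iha ha _ this
  | strongRel a b iha ihb =>
      intro h i hs
      have ha : subf a ⊆ subf φ := fun x hx => h (by simp [subf]; tauto)
      have hb : subf b ⊆ subf φ := fun x hx => h (by simp [subf]; tauto)
      obtain ⟨k, hk1, hk2⟩ := hs
      rw [suffix_suffix] at hk1
      refine ⟨k, ?_, fun j hj => ?_⟩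
      · rw [suffix_suffix]; exact iha ha _ hk1
      · rw [suffix_suffix]
        have := hk2 j hj
        rw [suffix_suffix] at this
        exact ihb hb _ this
  | glob a iha =>
      intro h i hs
      have hs' : ∀ m, Sat (suffix w (i + m)) a := by
        intro m; rw [← suffix_suffix]; exact hs m
      have hmem : LTL.glob a ∈ FGSet φ w := by
        refine ⟨⟨h (mem_subf_self _), trivial⟩, ⟨i, fun k j => ?_⟩⟩
        rw [suffix_suffix, suffix_suffix]
        exact hs' (k + j)
      simp only [evalMu, if_pos hmem]
      trivial
  | wUntl a b iha ihb =>
      intro h i hs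
      have ha : subf a ⊆ subf φ := fun x hx => h (by simp [subf]; tauto)
      have hb : subf b ⊆ subf φ := fun x hx => h (by simp [subf]; tauto)
      by_cases hmem : LTL.wUntl a b ∈ FGSet φ w
      · simp only [evalMu, if_pos hmem]; trivial
      · have hnsat : ¬ Sat w (LTL.fut (LTL.glob (LTL.wUntl a b))) :=
          fun hc => hmem ⟨⟨h (mem_subf_self _), trivial⟩, hc⟩
        rcases hs with hg | hu
        · exfalso
          apply hnsat
          have hg' : ∀ m, Sat (suffix w (i + m)) a := by
            intro m; rw [← suffix_suffix]; exact hg m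
          refine ⟨i, fun k => Or.inl (fun j => ?_)⟩
          rw [suffix_suffix, suffix_suffix]
          exact hg' (k + j)
        · obtain ⟨k, hk2, hk1⟩ := hu
          rw [suffix_suffix] at hk2
          simp only [evalMu, if_neg hmem]
          refine ⟨k, ?_, fun j hj => ?_⟩
          · rw [suffix_suffix]; exact ihb hb _ hk2
          · rw [suffix_suffix]
            have := hk1 j hj
            rw [suffix_suffix] at this
            exact iha ha _ this
  | rel a b iha ihb =>
      intro h i hs
      have ha : subf a ⊆ subf φ := fun x hx => h (by simp [subf]; tauto)
      have hb : subf b ⊆ subf φ := fun x hx => h (by simp [subf]; tauto)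
      by_cases hmem : LTL.rel a b ∈ FGSet φ w
      · simp only [evalMu, if_pos hmem]; trivial
      · have hnsat : ¬ Sat w (LTL.fut (LTL.glob (LTL.rel a b))) :=
          fun hc => hmem ⟨⟨h (mem_subf_self _), trivial⟩, hc⟩
        rcases hs with hg | hu
        · exfalso
          apply hnsat
          have hg' : ∀ m, Sat (suffix w (i + m)) b := by
            intro m; rw [← suffix_suffix]; exact hg m
          refine ⟨i, fun k => Or.inl (fun j => ?_)⟩
          rw [suffix_suffix, suffix_suffix]
          exact hg' (k + j)
        · obtain ⟨k, hk1, hk2⟩ := hu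
          rw [suffix_suffix] at hk1
          simp only [evalMu, if_neg hmem]
          refine ⟨k, ?_, fun j hj => ?_⟩
          · rw [suffix_suffix]; exact iha ha _ hk1
          · rw [suffix_suffix]
            have := hk2 j hj
            rw [suffix_suffix] at this
            exact ihb hb _ this

end Mu
section Nu

variable {Ap : Type} [DecidableEq Ap]

lemma nuLemma (φ : LTL Ap) (w : ℕ → Finset Ap) :
    ∀ ψ : LTL Ap, subf ψ ⊆ subf φ →
      ∃ N, ∀ i, N ≤ i → Sat (suffix w i) ψ → Sat (suffix w i) (evalNu (GFSet φ w) ψ) := by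
  intro ψ
  induction ψ with
  | tt => intro _; exact ⟨0, fun i _ hs => by simpa [evalNu] using hs⟩
  | ff => intro _; exact ⟨0, fun i _ hs => by simpa [evalNu] using hs⟩
  | atom a => intro _; exact ⟨0, fun i _ hs => by simpa [evalNu] using hs⟩
  | natom a => intro _; exact ⟨0, fun i _ hs => by simpa [evalNu] using hs⟩
  | conj a b iha ihb =>
      intro h
      have ha : subf a ⊆ subf φ := fun x hx => h (by simp [subf]; tauto)
      have hb : subf b ⊆ subf φ := fun x hx => h (by simp [subf]; tauto)
      obtain ⟨N1, h1⟩ := iha ha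
      obtain ⟨N2, h2⟩ := ihb hb
      refine ⟨max N1 N2, fun i hi hs => ?_⟩
      exact ⟨h1 i (le_trans (le_max_left _ _) hi) hs.1,
             h2 i (le_trans (le_max_right _ _) hi) hs.2⟩
  | disj a b iha ihb =>
      intro h
      have ha : subf a ⊆ subf φ := fun x hx => h (by simp [subf]; tauto)
      have hb : subf b ⊆ subf φ := fun x hx => h (by simp [subf]; tauto)
      obtain ⟨N1, h1⟩ := iha ha
      obtain ⟨N2, h2⟩ := ihb hb
      refine ⟨max N1 N2, fun i hi hs => ?_⟩
      rcases hs with hs | hs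
      · exact Or.inl (h1 i (le_trans (le_max_left _ _) hi) hs)
      · exact Or.inr (h2 i (le_trans (le_max_right _ _) hi) hs)
  | next a iha =>
      intro h
      have ha : subf a ⊆ subf φ := fun x hx => h (by simp [subf]; tauto)
      obtain ⟨N, h1⟩ := iha ha
      refine ⟨N, fun i hi hs => ?_⟩
      show Sat (suffix (suffix w i) 1) (evalNu (GFSet φ w) a)
      rw [suffix_suffix]
      rw [show Sat (suffix w i) (LTL.next a) = Sat (suffix (suffix w i) 1) a from rfl,
        suffix_suffix] at hs
      exact h1 _ (le_trans hi (Nat.le_succ i)) hs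
  | fut a iha =>
      intro h
      by_cases hmem : LTL.fut a ∈ GFSet φ w
      · exact ⟨0, fun i _ _ => by simp only [evalNu, if_pos hmem]; trivial⟩
      · have hn : ¬ Sat w (LTL.glob (LTL.fut (LTL.fut a))) :=
          fun hc => hmem ⟨⟨h (mem_subf_self _), trivial⟩, hc⟩
        obtain ⟨N, hN⟩ := notGF hn
        exact ⟨N, fun i hi hs => absurd hs (hN i hi)⟩
  | untl a b iha ihb =>
      intro h
      have ha : subf a ⊆ subf φ := fun x hx => h (by simp [subf]; tauto)
      have hb : subf b ⊆ subf φ := fun x hx => h (by simp [subf]; tauto)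
      by_cases hmem : LTL.untl a b ∈ GFSet φ w
      · obtain ⟨N1, h1⟩ := iha ha
        obtain ⟨N2, h2⟩ := ihb hb
        refine ⟨max N1 N2, fun i hi hs => ?_⟩
        simp only [evalNu, if_pos hmem]
        obtain ⟨k, hk2, hk1⟩ := hs
        rw [suffix_suffix] at hk2
        refine Or.inr ⟨k, ?_, fun j hj => ?_⟩
        · rw [suffix_suffix]
          exact h2 _ (le_trans (le_trans (le_max_right _ _) hi) (Nat.le_add_right _ _)) hk2
        · rw [suffix_suffix]
          have := hk1 j hj
          rw [suffix_suffix] at this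
          exact h1 _ (le_trans (le_trans (le_max_left _ _) hi) (Nat.le_add_right _ _)) this
      · have hn : ¬ Sat w (LTL.glob (LTL.fut (LTL.untl a b))) :=
          fun hc => hmem ⟨⟨h (mem_subf_self _), trivial⟩, hc⟩
        obtain ⟨N, hN⟩ := notGF hn
        refine ⟨N, fun i hi hs => absurd hs (hN i hi)⟩
  | strongRel a b iha ihb =>
      intro h
      have ha : subf a ⊆ subf φ := fun x hx => h (by simp [subf]; tauto)
      have hb : subf b ⊆ subf φ := fun x hx => h (by simp [subf]; tauto)
      by_cases hmem : LTL.strongRel a b ∈ GFSet φ w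
      · obtain ⟨N1, h1⟩ := iha ha
        obtain ⟨N2, h2⟩ := ihb hb
        refine ⟨max N1 N2, fun i hi hs => ?_⟩
        simp only [evalNu, if_pos hmem]
        obtain ⟨k, hk1, hk2⟩ := hs
        rw [suffix_suffix] at hk1
        refine Or.inr ⟨k, ?_, fun j hj => ?_⟩
        · rw [suffix_suffix]
          exact h1 _ (le_trans (le_trans (le_max_left _ _) hi) (Nat.le_add_right _ _)) hk1
        · rw [suffix_suffix]
          have := hk2 j hj
          rw [suffix_suffix] at this
          exact h2 _ (le_trans (le_trans (le_max_right _ _) hi) (Nat.le_add_right _ _)) this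
      · have hn : ¬ Sat w (LTL.glob (LTL.fut (LTL.strongRel a b))) :=
          fun hc => hmem ⟨⟨h (mem_subf_self _), trivial⟩, hc⟩
        obtain ⟨N, hN⟩ := notGF hn
        refine ⟨N, fun i hi hs => absurd hs (hN i hi)⟩
  | glob a iha =>
      intro h
      have ha : subf a ⊆ subf φ := fun x hx => h (by simp [subf]; tauto)
      obtain ⟨N, h1⟩ := iha ha
      refine ⟨N, fun i hi hs => fun k => ?_⟩
      rw [suffix_suffix]
      have := hs k
      rw [suffix_suffix] at this
      exact h1 _ (le_trans hi (Nat.le_add_right _ _)) this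
  | wUntl a b iha ihb =>
      intro h
      have ha : subf a ⊆ subf φ := fun x hx => h (by simp [subf]; tauto)
      have hb : subf b ⊆ subf φ := fun x hx => h (by simp [subf]; tauto)
      obtain ⟨N1, h1⟩ := iha ha
      obtain ⟨N2, h2⟩ := ihb hb
      refine ⟨max N1 N2, fun i hi hs => ?_⟩
      rcases hs with hg | hu
      · refine Or.inl (fun k => ?_)
        rw [suffix_suffix]
        have := hg k
        rw [suffix_suffix] at this
        exact h1 _ (le_trans (le_trans (le_max_left _ _) hi) (Nat.le_add_right _ _)) this
      · obtain ⟨k, hk2, hk1⟩ := hu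
        rw [suffix_suffix] at hk2
        refine Or.inr ⟨k, ?_, fun j hj => ?_⟩
        · rw [suffix_suffix]
          exact h2 _ (le_trans (le_trans (le_max_right _ _) hi) (Nat.le_add_right _ _)) hk2
        · rw [suffix_suffix]
          have := hk1 j hj
          rw [suffix_suffix] at this
          exact h1 _ (le_trans (le_trans (le_max_left _ _) hi) (Nat.le_add_right _ _)) this
  | rel a b iha ihb =>
      intro h
      have ha : subf a ⊆ subf φ := fun x hx => h (by simp [subf]; tauto)
      have hb : subf b ⊆ subf φ := fun x hx => h (by simp [subf]; tauto)
      obtain ⟨N1, h1⟩ := iha ha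
      obtain ⟨N2, h2⟩ := ihb hb
      refine ⟨max N1 N2, fun i hi hs => ?_⟩
      rcases hs with hg | hu
      · refine Or.inl (fun k => ?_)
        rw [suffix_suffix]
        have := hg k
        rw [suffix_suffix] at this
        exact h2 _ (le_trans (le_trans (le_max_right _ _) hi) (Nat.le_add_right _ _)) this
      · obtain ⟨k, hk1, hk2⟩ := hu
        rw [suffix_suffix] at hk1
        refine Or.inr ⟨k, ?_, fun j hj => ?_⟩
        · rw [suffix_suffix]
          exact h1 _ (le_trans (le_trans (le_max_left _ _) hi) (Nat.le_add_right _ _)) hk1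
        · rw [suffix_suffix]
          have := hk2 j hj
          rw [suffix_suffix] at this
          exact h2 _ (le_trans (le_trans (le_max_right _ _) hi) (Nat.le_add_right _ _)) this

end Nu
/-- completeness of the mutual rely/guarantee check:
if `X = GF_w` and `Y = FG_w` then `w ⊨ GF(ψ[Y]_μ)` for all `ψ ∈ X` and
`w ⊨ FG(ψ[X]_ν)` for all `ψ ∈ Y`. -/
theorem stmt17 {Ap : Type} [DecidableEq Ap] [Fintype Ap]
    (φ : LTL Ap) (w : ℕ → Finset Ap) (X Y : Set (LTL Ap))
    (hX : X = GFSet φ w) (hY : Y = FGSet φ w) :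
    (∀ ψ ∈ X, Sat w (LTL.glob (LTL.fut (evalMu Y ψ)))) ∧
    (∀ ψ ∈ Y, Sat w (LTL.fut (LTL.glob (evalNu X ψ)))) := by
  subst hX hY
  constructor
  · rintro ψ ⟨⟨hsub, -⟩, hGF⟩
    have hsub' : subf ψ ⊆ subf φ := subf_trans φ ψ hsub
    intro k
    obtain ⟨j, hj⟩ := hGF k
    rw [suffix_suffix] at hj
    exact ⟨j, by rw [suffix_suffix]; exact muLemma φ w ψ hsub' _ hj⟩
  · rintro ψ ⟨⟨hsub, -⟩, hFG⟩
    have hsub' : subf ψ ⊆ subf φ := subf_trans φ ψ hsub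
    obtain ⟨m, hm⟩ := hFG
    obtain ⟨N, hN⟩ := nuLemma φ w ψ hsub'
    have hsat : ∀ i, m ≤ i → Sat (suffix w i) ψ := by
      intro i hi
      have := hm (i - m)
      rwa [suffix_suffix, Nat.add_sub_cancel' hi] at this
    refine ⟨max m N, fun k => ?_⟩
    rw [suffix_suffix]
    exact hN _ (le_trans (le_max_right _ _) (Nat.le_add_right _ _))
      (hsat _ (le_trans (le_max_left _ _) (Nat.le_add_right _ _)))
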